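/- If G is a finitely generated nilpotent group and the centralizer of some finitely generated subgroup of G is finite, then G is finite. -/

import Mathlib

/-!
The centre of `G` lies in every centralizer, so it is finite. If `G` is generated by a finite
set `S` and has finite centre `Z`, the commutators `⁅x, s⁆` with `s ∈ S` of a lift `x` of an
element of the centre of `G ⧸ Z` lie in `Z` and determine `x` modulo `Z`;
hence the centre of `G ⧸ Z` is finite as well, and induction on the nilpotency class shows
that `G` is finite.
-/

open Subgroup QuotientGroup
open scoped commutatorElement

section

variable {G : Type*} [Group G]

lemma commute_inv_mul_of_commutatorElement_eq {a b g : G} (h : ⁅a, g⁆ = ⁅b, g⁆) :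
    Commute (a⁻¹ * b) g := by
  rw [commutatorElement_def, commutatorElement_def, mul_left_inj] at h
  calc a⁻¹ * b * g = a⁻¹ * (b * g * b⁻¹) * b := by group
    _ = a⁻¹ * (a * g * a⁻¹) * b := by rw [h]
    _ = g * (a⁻¹ * b) := by group

lemma inv_mul_mem_center_of_commutatorElement_eq {S : Set G} (hS : closure S = ⊤) {a b : G}
    (h : ∀ s ∈ S, ⁅a, s⁆ = ⁅b, s⁆) : a⁻¹ * b ∈ center G := by
  rw [← centralizer_univ, ← coe_top, ← hS, centralizer_closure, mem_centralizer_iff]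
  exact fun s hs => (commute_inv_mul_of_commutatorElement_eq (h s hs)).symm

lemma commutatorElement_mem_of_mk_mem_center {N : Subgroup G} [N.Normal] {x : G}
    (hx : (x : G ⧸ N) ∈ center (G ⧸ N)) (g : G) : ⁅x, g⁆ ∈ N := by
  have : x ∈ N.upperCentralSeriesStep := by
    rw [Subgroup.upperCentralSeriesStep_eq_comap_center]
    exact hx
  exact (Subgroup.mem_upperCentralSeriesStep N x).mp this g

lemma finite_center_quotient_center [Group.FG G] [Finite (center G)] :
    Finite (center (G ⧸ center G)) := by
  obtain ⟨S, hS⟩ := Group.FG.out (G := G)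
  let f : center (G ⧸ center G) → S → center G := fun z s =>
    ⟨⁅(z : G ⧸ center G).out, (s : G)⁆,
      commutatorElement_mem_of_mk_mem_center (by rw [out_eq']; exact z.2) (s : G)⟩
  refine Finite.of_injective f fun z w hzw => ?_
  have hmem := inv_mul_mem_center_of_commutatorElement_eq hS fun s hs =>
    congrArg Subtype.val (congrFun hzw ⟨s, hs⟩)
  ext
  rw [← out_eq' (z : G ⧸ center G), ← out_eq' (w : G ⧸ center G)]
  exact QuotientGroup.eq.mpr hmem

lemma finite_of_isNilpotent_of_finite_center [Group.IsNilpotent G] [Group.FG G]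
    [Finite (center G)] : Finite G := by
  refine Group.nilpotent_center_quotient_ind
    (P := fun G _ _ => Group.FG G → Finite (center G) → Finite G) G ?_ ?_ ‹_› ‹_›
  · intro G _ _ _ _
    infer_instance
  · intro G _ _ ih _ _
    have := ih inferInstance finite_center_quotient_center
    exact Finite.of_subgroup_quotient (center G)

end

theorem finite_of_fg_nilpotent_finite_centralizer_general {G : Type*} [Group G]
    [Group.IsNilpotent G] [Group.FG G] (H : Subgroup G)
    (hC : Finite (Subgroup.centralizer (H : Set G))) :
    Finite G := by
  have : Finite (center G) :=
    Finite.of_injective _ (inclusion_injective (center_le_centralizer (H : Set G)))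
  exact finite_of_isNilpotent_of_finite_center

theorem finite_of_fg_nilpotent_finite_centralizer {G : Type*} [Group G]
    [Group.IsNilpotent G] [Group.FG G] (H : Subgroup G) (hH : H.FG)
    (hC : Finite (Subgroup.centralizer (H : Set G))) :
    Finite G :=
  finite_of_fg_nilpotent_finite_centralizer_general H hC
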